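/- arXiv:math/0612081 — 2 statements merged into one kernel-verified Lean document; each statement's English description precedes it below -/
import Mathlib

section
/- Let Λ be a directed set and {N_λ}_{λ∈Λ} an inductive system of cofinitely generated Z_p-modules such that for all λ' ≥ λ the cokernel of the transition map N_λ → N_{λ'} is divisible. Let L be a cofinitely generated Z_p-module and {f_λ : N_λ → L} a compatible family of Z_p-homomorphisms. Then there exists λ₀ ∈ Λ such that for all λ ≥ λ₀, the cokernel of the inclusion Ker(f_{λ₀}) → Ker(f_λ) is divisible. -/
abbrev QpModZp (p : ℕ) [Fact p.Prime] :=
  ℚ_[p] ⧸ LinearMap.range (Algebra.linearMap ℤ_[p] ℚ_[p])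

def CofinGen (p : ℕ) [Fact p.Prime] (A : Type*) [AddCommGroup A] [Module ℤ_[p] A] : Prop :=
  Module.Finite ℤ_[p] (A →ₗ[ℤ_[p]] QpModZp p)

def IsDivisibleSubmodule (p : ℕ) [Fact p.Prime] {A : Type*} [AddCommGroup A] [Module ℤ_[p] A]
    (D : Submodule ℤ_[p] A) : Prop :=
  ∀ x ∈ D, ∃ y ∈ D, (p : ℤ_[p]) • y = x

noncomputable def divPart (p : ℕ) [Fact p.Prime] (A : Type*) [AddCommGroup A] [Module ℤ_[p] A] :
    Submodule ℤ_[p] A :=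
  sSup {D | IsDivisibleSubmodule p D}

abbrev Cotor (p : ℕ) [Fact p.Prime] (A : Type*) [AddCommGroup A] [Module ℤ_[p] A] :=
  A ⧸ divPart p A

/-!
A cofinitely generated `ℤ_p`-module `L` is `p`-power torsion with finite `p`-torsion `L[p]`.
Indeed `ℚ_p/ℤ_p` is an injective cogenerator which, being divisible, is not finitely generated
(Nakayama); so an element of `L` with trivial annihilator would make evaluation
`Hom(L, ℚ_p/ℤ_p) → ℚ_p/ℤ_p` surjective, and `L[p]` embeds into `(ℚ_p/ℤ_p)[p]^s` for a finite
generating set `s` of the dual.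

In such a module the `p`-torsion of `p^k M` decreases with `k` inside the finite set `L[p]`; once
it is stable, `p^k M` is divisible, hence the divisible part `D(M)` of `M`. A divisible `D ≤ A`
with `A[p] ≤ D` is all of `A`, so the divisible parts `D_λ` of the images of the `f_λ`, which
increase with `λ`, are constant from any `λ₀` maximizing `D_λ[p]` on. For `x ∈ Ker f_λ`,
divisibility of the cokernel gives `x = t(z) + p^{k+1} y`, and
`p^k f_λ(y) ∈ D_λ = D_{λ₀} = p D_{λ₀}` lets one move `y` and `z` into the kernels.
-/

open Pointwise IsLocalRing

theorem Module.Baer.of_exists_smul_eq {R M : Type*} [CommRing R] [IsPrincipalIdealRing R]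
    [AddCommGroup M] [Module R M] (h : ∀ r : R, r ≠ 0 → ∀ m : M, ∃ y, r • y = m) :
    Module.Baer R M := fun I g ↦ by
  obtain ⟨a, rfl⟩ := IsPrincipalIdealRing.principal I
  obtain rfl | ha := eq_or_ne a 0
  · refine ⟨0, fun r hr ↦ ?_⟩
    rw [Submodule.span_zero_singleton, Submodule.mem_bot] at hr
    subst hr
    exact (map_zero g).symm
  obtain ⟨y, hy⟩ := h a ha (g ⟨a, Submodule.mem_span_singleton_self a⟩)
  refine ⟨LinearMap.toSpanSingleton R M y, fun r hr ↦ ?_⟩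
  obtain ⟨c, rfl⟩ := Submodule.mem_span_singleton.mp hr
  rw [LinearMap.toSpanSingleton_apply, smul_assoc, hy, ← map_smul]
  rfl

theorem Module.Baer.exists_linearMap_apply_eq {R Q M : Type*} [CommRing R] [AddCommGroup Q]
    [Module R Q] [AddCommGroup M] [Module R M] (hQ : Module.Baer R Q) {x : M} {e : Q}
    (h : ∀ a : R, a • x = 0 → a • e = 0) : ∃ φ : M →ₗ[R] Q, φ x = e := by
  set g := LinearMap.toSpanSingleton R M x
  have hker : LinearMap.ker g ≤ LinearMap.ker (LinearMap.toSpanSingleton R Q e) :=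
    fun a ha ↦ h a ha
  obtain ⟨φ, hφ⟩ := hQ.extension_property (g.range.subtype ∘ₗ g.quotKerEquivRange.toLinearMap)
    (g.range.injective_subtype.comp g.quotKerEquivRange.injective) ((LinearMap.ker g).liftQ _ hker)
  have := LinearMap.congr_fun hφ (Submodule.Quotient.mk 1)
  simp only [LinearMap.comp_apply, LinearEquiv.coe_coe, LinearMap.quotKerEquivRange_apply_mk,
    Submodule.subtype_apply, Submodule.liftQ_apply, LinearMap.toSpanSingleton_apply, one_smul,
    g] at this
  exact ⟨φ, this⟩

namespace QpModZp

variable {p : ℕ} [Fact p.Prime]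

theorem mk_eq_zero_iff (q : ℚ_[p]) : (Submodule.Quotient.mk q : QpModZp p) = 0 ↔ ‖q‖ ≤ 1 := by
  rw [Submodule.Quotient.mk_eq_zero, LinearMap.mem_range]
  exact ⟨by rintro ⟨a, rfl⟩; exact a.2, fun h ↦ ⟨⟨q, h⟩, rfl⟩⟩

theorem smul_mk (a : ℤ_[p]) (q : ℚ_[p]) :
    a • (Submodule.Quotient.mk q : QpModZp p) = Submodule.Quotient.mk (a * q) :=
  (Submodule.Quotient.mk_smul _ a q).symm

theorem exists_smul_eq {a : ℤ_[p]} (ha : a ≠ 0) (e : QpModZp p) : ∃ e', a • e' = e := by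
  obtain ⟨q, rfl⟩ := Submodule.Quotient.mk_surjective _ e
  refine ⟨Submodule.Quotient.mk (q / a), ?_⟩
  rw [smul_mk, mul_div_cancel₀ _ (PadicInt.coe_eq_zero.not.2 ha)]

theorem baer : Module.Baer ℤ_[p] (QpModZp p) :=
  Module.Baer.of_exists_smul_eq fun _ ha ↦ exists_smul_eq ha

noncomputable def invP : QpModZp p := Submodule.Quotient.mk (p : ℚ_[p])⁻¹

theorem invP_ne_zero : (invP : QpModZp p) ≠ 0 := by
  rw [invP, Ne, mk_eq_zero_iff, not_le, norm_inv, Padic.norm_p, inv_inv]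
  exact_mod_cast (Fact.out : p.Prime).one_lt

theorem smul_invP_eq_zero {a : ℤ_[p]} (ha : a ∈ maximalIdeal ℤ_[p]) :
    a • (invP : QpModZp p) = 0 := by
  rw [PadicInt.maximalIdeal_eq_span_p] at ha
  obtain ⟨c, rfl⟩ := Ideal.mem_span_singleton'.1 ha
  rw [invP, smul_mk, mk_eq_zero_iff, PadicInt.coe_mul, PadicInt.coe_natCast, mul_assoc,
    mul_inv_cancel₀ (by exact_mod_cast (Fact.out : p.Prime).ne_zero), mul_one]
  exact c.norm_le_one

theorem exists_smul_invP_eq {e : QpModZp p} (he : (p : ℤ_[p]) • e = 0) :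
    ∃ a : ℤ_[p], a • invP = e := by
  obtain ⟨q, rfl⟩ := Submodule.Quotient.mk_surjective _ e
  rw [smul_mk, mk_eq_zero_iff] at he
  set a : ℤ_[p] := ⟨_, he⟩
  refine ⟨a, ?_⟩
  rw [invP, smul_mk, show (a : ℚ_[p]) = p * q from rfl, mul_comm _ q, mul_assoc,
    mul_inv_cancel₀ (by exact_mod_cast (Fact.out : p.Prime).ne_zero), mul_one]

theorem finite_torsionBy :
    (Submodule.torsionBy ℤ_[p] (QpModZp p) p : Set (QpModZp p)).Finite := by
  refine ((Set.finite_lt_nat p).image fun n : ℕ ↦ (n : ℤ_[p]) • invP).subset fun e he ↦ ?_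
  obtain ⟨a, rfl⟩ := exists_smul_invP_eq he
  refine ⟨a.zmodRepr, a.zmodRepr_lt_p, ?_⟩
  rw [eq_comm, ← sub_eq_zero, ← sub_smul]
  exact smul_invP_eq_zero (PadicInt.sub_zmodRepr_mem a)

theorem exists_linearMap_apply_ne_zero {L : Type*} [AddCommGroup L] [Module ℤ_[p] L] {x : L}
    (hx : x ≠ 0) : ∃ φ : L →ₗ[ℤ_[p]] QpModZp p, φ x ≠ 0 := by
  obtain ⟨φ, hφ⟩ := (baer (p := p)).exists_linearMap_apply_eq (x := x) (e := invP) fun a ha ↦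
    smul_invP_eq_zero ((mem_maximalIdeal a).2 fun hu ↦ hx (hu.smul_eq_zero.1 ha))
  exact ⟨φ, hφ ▸ invP_ne_zero⟩

theorem not_finite : ¬ Module.Finite ℤ_[p] (QpModZp p) := by
  intro hfin
  have : Nontrivial (QpModZp p) := ⟨⟨invP, 0, invP_ne_zero⟩⟩
  refine Submodule.top_ne_pointwise_smul_of_mem_jacobson_annihilator (M := QpModZp p)
    (maximalIdeal_le_jacobson _
      (PadicInt.maximalIdeal_eq_span_p (p := p) ▸ Ideal.mem_span_singleton_self (p : ℤ_[p])))
    (top_le_iff.1 fun e _ ↦ ?_).symm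
  obtain ⟨e', rfl⟩ := exists_smul_eq (Nat.cast_ne_zero.2 (Fact.out : p.Prime).ne_zero) e
  exact Submodule.smul_mem_pointwise_smul _ _ _ trivial

end QpModZp

namespace Submodule

variable {R L : Type*} [CommRing R] [AddCommGroup L] [Module R L] {π : R}

theorem pow_smul_eq_self {D : Submodule R L} (hD : π • D = D) (n : ℕ) : π ^ n • D = D := by
  induction n with
  | zero => rw [pow_zero, one_smul]
  | succ n ih => rw [pow_succ, mul_smul, hD, ih]

theorem le_pow_smul_of_smul_eq_self {D M : Submodule R L} (hD : π • D = D) (hDM : D ≤ M) (n : ℕ) :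
    D ≤ π ^ n • M :=
  pow_smul_eq_self hD n ▸ smul_mono_right _ hDM

theorem finite_image_of_le {ι : Type*} {N : Submodule R L} (hN : (N : Set L).Finite)
    (T : ι → Submodule R L) (hT : ∀ i, T i ≤ N) (s : Set ι) : (T '' s).Finite :=
  (hN.finite_subsets.preimage SetLike.coe_injective.injOn).subset
    (Set.image_subset_iff.2 fun i _ ↦ hT i)

theorem le_of_forall_exists_pow_smul_eq (htors : ∀ x : L, ∃ n : ℕ, π ^ n • x = 0)
    {A B : Submodule R L}
    (h : ∀ (n : ℕ), ∀ x ∈ A, π ^ (n + 1) • x = 0 → ∃ w ∈ A ⊓ B, π ^ n • w = π ^ n • x) :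
    A ≤ B := by
  suffices ∀ n : ℕ, ∀ x ∈ A, π ^ n • x = 0 → x ∈ B from
    fun x hx ↦ (htors x).elim fun n hn ↦ this n x hx hn
  intro n
  induction n with
  | zero => intro x _ hx; simp_all
  | succ n ih =>
    intro x hxA hx
    obtain ⟨w, ⟨hwA, hwB⟩, hw⟩ := h n x hxA hx
    have : x - w ∈ B := ih _ (sub_mem hxA hwA) (by rw [smul_sub, hw, sub_self])
    simpa using add_mem this hwB

theorem le_of_smul_eq_self_of_inf_torsionBy_le (htors : ∀ x : L, ∃ n : ℕ, π ^ n • x = 0)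
    {A B : Submodule R L} (hB : π • B = B) (hBA : B ≤ A)
    (h : A ⊓ torsionBy R L π ≤ B) : A ≤ B := by
  refine le_of_forall_exists_pow_smul_eq htors fun n x hxA hx ↦ ?_
  have : π ^ n • x ∈ π ^ n • B := by
    rw [pow_smul_eq_self hB]
    exact h ⟨A.smul_mem _ hxA, (mem_torsionBy_iff _ _).2 (by rw [smul_smul, ← pow_succ', hx])⟩
  obtain ⟨w, hwB, hw⟩ := (mem_smul_pointwise_iff_exists _ _ _).1 this
  exact ⟨w, ⟨hBA hwB, hwB⟩, hw⟩

theorem exists_smul_pow_smul_eq_self (htors : ∀ x : L, ∃ n : ℕ, π ^ n • x = 0)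
    (hfin : (torsionBy R L π : Set L).Finite)
    (M : Submodule R L) : ∃ k : ℕ, π • (π ^ k • M) = π ^ k • M := by
  set T : ℕ → Submodule R L := fun k ↦ π ^ k • M ⊓ torsionBy R L π
  have hT : Antitone T := fun k k' hkk' ↦ by
    obtain ⟨n, rfl⟩ := Nat.exists_eq_add_of_le hkk'
    refine inf_le_inf_right _ ?_
    rw [pow_add, mul_smul]
    exact smul_mono_right _ (smul_le_self_of_tower _ _)
  obtain ⟨k, -, hk⟩ := Set.Finite.exists_minimalFor' T Set.univ
    (finite_image_of_le hfin _ (fun _ ↦ inf_le_right) _) Set.univ_nonempty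
  refine ⟨k, le_antisymm (smul_le_self_of_tower _ _) ?_⟩
  refine le_of_forall_exists_pow_smul_eq htors fun n x hxA hx ↦ ?_
  have hxT : π ^ n • x ∈ T k := ⟨smul_mem _ _ hxA, (mem_torsionBy_iff _ _).2 (by
    rw [smul_smul, ← pow_succ', hx])⟩
  have : π ^ n • x ∈ π ^ n • π • π ^ k • M := by
    rw [← mul_smul, ← mul_smul, ← pow_succ, ← pow_add]
    exact (hk trivial (hT (by omega)) hxT).1
  obtain ⟨w, hw, hwx⟩ := (mem_smul_pointwise_iff_exists _ _ _).1 this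
  exact ⟨w, ⟨smul_le_self_of_tower _ _ hw, hw⟩, hwx⟩

theorem exists_pow_smul_le_smul (htors : ∀ x : L, ∃ n : ℕ, π ^ n • x = 0)
    (hfin : (torsionBy R L π : Set L).Finite)
    {ι : Type*} [Preorder ι] [Nonempty ι] (M : ι → Submodule R L) (hM : Monotone M) :
    ∃ l₀, ∀ l, l₀ ≤ l → ∃ k : ℕ, π ^ k • M l ≤ π • M l₀ := by
  choose k hk using fun l ↦ exists_smul_pow_smul_eq_self htors hfin (M l)
  -- `D l` is the divisible part of `M l`.
  set D : ι → Submodule R L := fun l ↦ π ^ k l • M l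
  have hD : Monotone D := fun l l' h ↦
    le_pow_smul_of_smul_eq_self (hk l) ((smul_le_self_of_tower _ _).trans (hM h)) (k l')
  obtain ⟨l₀, -, hl₀⟩ := Set.Finite.exists_maximalFor' (fun l ↦ D l ⊓ torsionBy R L π) Set.univ
    (finite_image_of_le hfin _ (fun _ ↦ inf_le_right) _) Set.univ_nonempty
  refine ⟨l₀, fun l hl ↦ ⟨k l, ?_⟩⟩
  have hDl : D l ≤ D l₀ := le_of_smul_eq_self_of_inf_torsionBy_le htors (hk l₀) (hD hl)
    ((hl₀ trivial (inf_le_inf_right _ (hD hl))).trans inf_le_left)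
  calc D l ≤ D l₀ := hDl
    _ = π • D l₀ := (hk l₀).symm
    _ ≤ π • M l₀ := smul_mono_right _ (smul_le_self_of_tower _ _)

end Submodule

namespace CofinGen

variable {p : ℕ} [Fact p.Prime] {L : Type*} [AddCommGroup L] [Module ℤ_[p] L]

theorem exists_pow_smul_eq_zero (hL : CofinGen p L) (x : L) :
    ∃ n : ℕ, (p : ℤ_[p]) ^ n • x = 0 := by
  set g := LinearMap.toSpanSingleton ℤ_[p] L x
  by_cases hker : LinearMap.ker g = ⊥
  · have : Module.Finite ℤ_[p] (L →ₗ[ℤ_[p]] QpModZp p) := hL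
    refine (QpModZp.not_finite (p := p)
      (Module.Finite.of_surjective (LinearMap.applyₗ x) fun e ↦ ?_)).elim
    exact QpModZp.baer.exists_linearMap_apply_eq fun a ha ↦ by
      rw [LinearMap.ker_eq_bot'.1 hker a ha, zero_smul]
  · obtain ⟨n, hn⟩ := PadicInt.ideal_eq_span_pow_p hker
    have : (p : ℤ_[p]) ^ n ∈ LinearMap.ker g := hn ▸ Ideal.mem_span_singleton_self _
    exact ⟨n, this⟩

theorem finite_torsionBy (hL : CofinGen p L) :
    (Submodule.torsionBy ℤ_[p] L p : Set L).Finite := by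
  have : Module.Finite ℤ_[p] (L →ₗ[ℤ_[p]] QpModZp p) := hL
  obtain ⟨s, hs⟩ := Module.Finite.fg_top (R := ℤ_[p]) (M := L →ₗ[ℤ_[p]] QpModZp p)
  have : Finite (Submodule.torsionBy ℤ_[p] (QpModZp p) p) := QpModZp.finite_torsionBy.to_subtype
  let F (x : Submodule.torsionBy ℤ_[p] L p) (φ : s) : Submodule.torsionBy ℤ_[p] (QpModZp p) p :=
    ⟨φ.1 x, (Submodule.mem_torsionBy_iff _ _).2 (by
      rw [← map_smul, (Submodule.mem_torsionBy_iff _ _).1 x.2, map_zero])⟩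
  refine Set.finite_coe_iff.1 (Finite.of_injective F fun x y hxy ↦ ?_)
  by_contra hne
  obtain ⟨φ, hφ⟩ :=
    QpModZp.exists_linearMap_apply_ne_zero (p := p) (sub_ne_zero.2 (Subtype.coe_ne_coe.2 hne))
  refine hφ (?_ : φ ∈ LinearMap.ker (LinearMap.applyₗ (x.1 - y.1)))
  refine (Submodule.span_le.2 fun ψ hψ ↦ ?_) (hs ▸ Submodule.mem_top)
  have := congrArg Subtype.val (congrFun hxy ⟨ψ, hψ⟩)
  simp only [F] at this
  simp [this]

end CofinGen

theorem LinearMap.exists_eq_sub_pow_smul {R N N' : Type*} [CommRing R] [AddCommGroup N]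
    [Module R N] [AddCommGroup N'] [Module R N'] {π : R} (t : N →ₗ[R] N')
    (ht : ∀ x : N', ∃ y : N', ∃ z : N, t z = x - π • y) (k : ℕ) (x : N') :
    ∃ y : N', ∃ z : N, t z = x - π ^ k • y := by
  induction k with
  | zero => exact ⟨x, 0, by simp⟩
  | succ k ih =>
    obtain ⟨y, z, hz⟩ := ih
    obtain ⟨y', z', hz'⟩ := ht y
    exact ⟨y', z + π ^ k • z', by rw [map_add, map_smul, hz, hz', pow_succ]; module⟩

theorem exists_coker_ker_divisible {R : Type*} [CommRing R] {π : R}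
    {Λ : Type*} [Preorder Λ] [Nonempty Λ]
    {N : Λ → Type*} [∀ l, AddCommGroup (N l)] [∀ l, Module R (N l)]
    (t : ∀ ⦃i j : Λ⦄, i ≤ j → N i →ₗ[R] N j)
    (hdivcoker : ∀ (i j : Λ) (hij : i ≤ j), ∀ x : N j, ∃ y : N j, ∃ z : N i,
      t hij z = x - π • y)
    {L : Type*} [AddCommGroup L] [Module R L] (htors : ∀ x : L, ∃ n : ℕ, π ^ n • x = 0)
    (hfin : (Submodule.torsionBy R L π : Set L).Finite)
    (f : ∀ i, N i →ₗ[R] L) (hf : ∀ (i j : Λ) (hij : i ≤ j), (f j).comp (t hij) = f i) :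
    ∃ l₀ : Λ, ∀ (l : Λ) (hl : l₀ ≤ l), ∀ x : N l, f l x = 0 →
      ∃ y : N l, f l y = 0 ∧ ∃ z : N l₀, f l₀ z = 0 ∧ t hl z = x - π • y := by
  obtain ⟨l₀, hl₀⟩ := Submodule.exists_pow_smul_le_smul htors hfin (fun l ↦ LinearMap.range (f l))
    fun i j hij ↦ by dsimp only; rw [← hf i j hij]; exact LinearMap.range_comp_le_range _ _
  refine ⟨l₀, fun l hl x hx ↦ ?_⟩
  have hft (v : N l₀) : f l (t hl v) = f l₀ v := LinearMap.congr_fun (hf l₀ l hl) v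
  obtain ⟨k, hk⟩ := hl₀ l hl
  obtain ⟨Y, Z, hZ⟩ := (t hl).exists_eq_sub_pow_smul (hdivcoker l₀ l hl) (k + 1) x
  obtain ⟨_, ⟨w, rfl⟩, hw⟩ := (Submodule.mem_smul_pointwise_iff_exists _ _ _).1
    (hk (Submodule.smul_mem_pointwise_smul _ _ _ (LinearMap.mem_range_self (f l) Y)))
  refine ⟨π ^ k • Y - π • t hl w, ?_, Z + π • π • w, ?_, ?_⟩
  · rw [map_sub, map_smul, map_smul, hft, hw, sub_self]
  · rw [map_add, map_smul, map_smul, ← hft Z, hZ, map_sub, hx, map_smul, hw]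
    module
  · rw [map_add, map_smul, map_smul, hZ]
    module

theorem stmt8_general {p : ℕ} [Fact p.Prime]
    {Λ : Type*} [Preorder Λ] [Nonempty Λ]
    (N : Λ → Type*) [∀ l, AddCommGroup (N l)] [∀ l, Module ℤ_[p] (N l)]
    (t : ∀ ⦃i j : Λ⦄, i ≤ j → N i →ₗ[ℤ_[p]] N j)
    (hdivcoker : ∀ (i j : Λ) (hij : i ≤ j), ∀ x : N j, ∃ y : N j, ∃ z : N i,
      t hij z = x - (p : ℤ_[p]) • y)
    {L : Type*} [AddCommGroup L] [Module ℤ_[p] L] (hL : CofinGen p L)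
    (f : ∀ i, N i →ₗ[ℤ_[p]] L)
    (hf : ∀ (i j : Λ) (hij : i ≤ j), (f j).comp (t hij) = f i) :
    ∃ l₀ : Λ, ∀ (l : Λ) (hl : l₀ ≤ l), ∀ x : N l, f l x = 0 →
      ∃ y : N l, f l y = 0 ∧ ∃ z : N l₀, f l₀ z = 0 ∧ t hl z = x - (p : ℤ_[p]) • y :=
  exists_coker_ker_divisible t hdivcoker hL.exists_pow_smul_eq_zero hL.finite_torsionBy f hf

/-- Sublemma 2.3: given an inductive system `{N_λ}` of cofinitely generated `ℤ_p`-modules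
over a directed set with divisible cokernels of transition maps, a cofinitely generated
`ℤ_p`-module `L` and a compatible family `f_λ : N_λ → L`, there is `λ₀` such that for
every `λ ≥ λ₀` the cokernel of `Ker(f_{λ₀}) → Ker(f_λ)` is divisible. -/
theorem stmt8 {p : ℕ} [Fact p.Prime]
    {Λ : Type*} [Preorder Λ] [IsDirected Λ (· ≤ ·)] [Nonempty Λ]
    (N : Λ → Type*) [∀ l, AddCommGroup (N l)] [∀ l, Module ℤ_[p] (N l)]
    (t : ∀ ⦃i j : Λ⦄, i ≤ j → N i →ₗ[ℤ_[p]] N j)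
    (ht_id : ∀ (i : Λ) (x : N i), t (le_refl i) x = x)
    (ht_comp : ∀ (i j k : Λ) (hij : i ≤ j) (hjk : j ≤ k) (x : N i),
      t hjk (t hij x) = t (hij.trans hjk) x)
    (hcofin : ∀ i, CofinGen p (N i))
    (hdivcoker : ∀ (i j : Λ) (hij : i ≤ j), ∀ x : N j, ∃ y : N j, ∃ z : N i,
      t hij z = x - (p : ℤ_[p]) • y)
    {L : Type*} [AddCommGroup L] [Module ℤ_[p] L] (hL : CofinGen p L)
    (f : ∀ i, N i →ₗ[ℤ_[p]] L)
    (hf : ∀ (i j : Λ) (hij : i ≤ j), (f j).comp (t hij) = f i) :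
    ∃ l₀ : Λ, ∀ (l : Λ) (hl : l₀ ≤ l), ∀ x : N l, f l x = 0 →
      ∃ y : N l, f l y = 0 ∧ ∃ z : N l₀, f l₀ z = 0 ∧ t hl z = x - (p : ℤ_[p]) • y :=
  stmt8_general N t hdivcoker hL f hf
end

section
/- Let {A_λ}_{λ∈Λ} be an inductive system of cofinitely generated Z_p-modules over a directed set Λ such that for each pair λ' ≥ λ the induced map Cotor(A_λ) → Cotor(A_{λ'}) is surjective, and suppose all Cotor(A_λ) are finite of bounded order eventually (e.g., because the system of cotorsion parts stabilizes). Then colim_λ (A_λ)_Div = (colim_λ A_λ)_Div. -/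
/-!
An element `x` of the divisible part of the limit can be written `x = p ^ C • y` with `C` the
bound on the orders of the cotorsion parts. Lift `y` to some `A j` with `j` beyond the point
where that bound holds. In `ℤ_p` a nonzero natural number `n` divides `p ^ n`, so `p ^ C`
annihilates the finite group `Cotor (A j)`; hence `p ^ C • y` is already in `(A j)_Div`.
-/

theorem PadicInt.natCast_dvd_p_pow {p : ℕ} [Fact p.Prime] {n : ℕ} (hn : n ≠ 0) :
    (n : ℤ_[p]) ∣ (p : ℤ_[p]) ^ n := by
  have hn' : (n : ℤ_[p]) ≠ 0 := Nat.cast_ne_zero.2 hn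
  set v := (n : ℤ_[p]).valuation
  have hspec : (n : ℤ_[p]) = unitCoeff hn' * (p : ℤ_[p]) ^ v := unitCoeff_spec hn'
  have hv : p ^ v ≤ n := by
    have hdvd : (p : ℤ_[p]) ^ v ∣ ((n : ℤ) : ℤ_[p]) := by
      rw [Int.cast_natCast, hspec]; exact dvd_mul_left _ _
    rw [pow_p_dvd_int_iff] at hdvd
    exact Nat.le_of_dvd (Nat.pos_of_ne_zero hn) (by exact_mod_cast hdvd)
  calc (n : ℤ_[p]) ∣ (p : ℤ_[p]) ^ v := by
        rw [hspec]; exact (Units.isUnit _).mul_left_dvd.2 dvd_rfl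
    _ ∣ (p : ℤ_[p]) ^ n :=
        pow_dvd_pow _ ((Nat.lt_pow_self (Fact.out : p.Prime).one_lt).le.trans hv)

theorem pow_smul_eq_zero_of_card_le {p : ℕ} [Fact p.Prime] {M : Type*} [AddCommGroup M]
    [Module ℤ_[p] M] [Finite M] {C : ℕ} (hC : Nat.card M ≤ C) (x : M) :
    (p : ℤ_[p]) ^ C • x = 0 := by
  obtain ⟨c, hc⟩ := (PadicInt.natCast_dvd_p_pow (p := p) Nat.card_pos.ne').trans
    (pow_dvd_pow (p : ℤ_[p]) hC)
  rw [hc, mul_comm, mul_smul, Nat.cast_smul_eq_nsmul, card_nsmul_eq_zero', smul_zero]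

section DivisibleSubmodule

variable {p : ℕ} [Fact p.Prime] {A : Type*} [AddCommGroup A] [Module ℤ_[p] A]

theorem isDivisibleSubmodule_sSup {S : Set (Submodule ℤ_[p] A)}
    (hS : ∀ D ∈ S, IsDivisibleSubmodule p D) : IsDivisibleSubmodule p (sSup S) := by
  intro x hx
  rw [sSup_eq_iSup'] at hx ⊢
  refine Submodule.iSup_induction _
    (motive := fun x => ∃ y ∈ ⨆ D : S, (D : Submodule ℤ_[p] A), (p : ℤ_[p]) • y = x)
    hx ?_ ?_ ?_
  · intro D z hz
    obtain ⟨y, hy, rfl⟩ := hS D D.2 z hz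
    exact ⟨y, Submodule.mem_iSup_of_mem D hy, rfl⟩
  · exact ⟨0, zero_mem _, smul_zero _⟩
  · rintro _ _ ⟨y, hy, rfl⟩ ⟨y', hy', rfl⟩
    exact ⟨y + y', add_mem hy hy', smul_add _ _ _⟩

theorem IsDivisibleSubmodule.exists_pow_smul_eq {D : Submodule ℤ_[p] A}
    (hD : IsDivisibleSubmodule p D) (n : ℕ) {x : A} (hx : x ∈ D) :
    ∃ y ∈ D, (p : ℤ_[p]) ^ n • y = x := by
  induction n generalizing x with
  | zero => exact ⟨x, hx, one_smul _ _⟩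
  | succ n ih =>
    obtain ⟨y, hy, rfl⟩ := hD x hx
    obtain ⟨z, hz, rfl⟩ := ih hy
    exact ⟨z, hz, by rw [pow_succ', mul_smul]⟩

theorem IsDivisibleSubmodule.map {B : Type*} [AddCommGroup B] [Module ℤ_[p] B]
    {D : Submodule ℤ_[p] A} (hD : IsDivisibleSubmodule p D) (f : A →ₗ[ℤ_[p]] B) :
    IsDivisibleSubmodule p (D.map f) := by
  rintro _ ⟨x, hx, rfl⟩
  obtain ⟨y, hy, rfl⟩ := hD x hx
  exact ⟨f y, Submodule.mem_map_of_mem hy, (map_smul f _ y).symm⟩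

theorem IsDivisibleSubmodule.le_divPart {D : Submodule ℤ_[p] A}
    (hD : IsDivisibleSubmodule p D) : D ≤ divPart p A :=
  le_sSup hD

variable (p A)

theorem isDivisibleSubmodule_divPart : IsDivisibleSubmodule p (divPart p A) :=
  isDivisibleSubmodule_sSup fun _ hD => hD

variable {p A}

theorem pow_smul_mem_divPart_of_card_cotor_le [Finite (Cotor p A)] {C : ℕ}
    (hC : Nat.card (Cotor p A) ≤ C) (x : A) : (p : ℤ_[p]) ^ C • x ∈ divPart p A := by
  rw [← Submodule.Quotient.mk_eq_zero, Submodule.Quotient.mk_smul]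
  exact pow_smul_eq_zero_of_card_le hC _

end DivisibleSubmodule

theorem stmt10_general {p : ℕ} [Fact p.Prime]
    {Λ : Type} [Preorder Λ] [IsDirected Λ (· ≤ ·)] [Nonempty Λ] [DecidableEq Λ]
    (A : Λ → Type) [∀ l, AddCommGroup (A l)] [∀ l, Module ℤ_[p] (A l)]
    (t : ∀ i j : Λ, i ≤ j → A i →ₗ[ℤ_[p]] A j)
    [DirectedSystem A fun i j h => t i j h]
    (hbdd : ∃ (C : ℕ) (l₁ : Λ), ∀ l : Λ, l₁ ≤ l →
      Finite (Cotor p (A l)) ∧ Nat.card (Cotor p (A l)) ≤ C) :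
    (⨆ i : Λ, Submodule.map (Module.DirectLimit.of ℤ_[p] Λ A t i) (divPart p (A i)))
      = divPart p (Module.DirectLimit A t) := by
  refine le_antisymm
    (iSup_le fun i => ((isDivisibleSubmodule_divPart p (A i)).map _).le_divPart) ?_
  intro x hx
  obtain ⟨C, l₁, hC⟩ := hbdd
  obtain ⟨y, -, rfl⟩ := (isDivisibleSubmodule_divPart p _).exists_pow_smul_eq C hx
  obtain ⟨i, z, rfl⟩ := Module.DirectLimit.exists_of y
  obtain ⟨j, hij, hl₁j⟩ := directed_of (· ≤ ·) i l₁
  obtain ⟨_, hcard⟩ := hC j hl₁j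
  refine Submodule.mem_iSup_of_mem j
    ⟨_, pow_smul_mem_divPart_of_card_cotor_le hcard (t i j hij z), ?_⟩
  rw [map_smul, Module.DirectLimit.of_f]

/-- Divisible parts commute with the direct limit: for an inductive system `{A_λ}` of
cofinitely generated `ℤ_p`-modules over a directed set whose cotorsion transition maps are
surjective, with the cotorsion parts eventually finite of bounded order, one has
`colim (A_λ)_Div = (colim A_λ)_Div` inside the direct limit. -/
theorem stmt10 {p : ℕ} [Fact p.Prime]
    {Λ : Type} [Preorder Λ] [IsDirected Λ (· ≤ ·)] [Nonempty Λ] [DecidableEq Λ]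
    (A : Λ → Type) [∀ l, AddCommGroup (A l)] [∀ l, Module ℤ_[p] (A l)]
    (t : ∀ i j : Λ, i ≤ j → A i →ₗ[ℤ_[p]] A j)
    [DirectedSystem A fun i j h => t i j h]
    (hcofin : ∀ i, CofinGen p (A i))
    (hcotorsurj : ∀ (i j : Λ) (hij : i ≤ j),
      ∀ x : A j, ∃ y : A i, x - t i j hij y ∈ divPart p (A j))
    (hbdd : ∃ (C : ℕ) (l₁ : Λ), ∀ l : Λ, l₁ ≤ l →
      Finite (Cotor p (A l)) ∧ Nat.card (Cotor p (A l)) ≤ C) :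
    (⨆ i : Λ, Submodule.map (Module.DirectLimit.of ℤ_[p] Λ A t i) (divPart p (A i)))
      = divPart p (Module.DirectLimit A t) :=
  stmt10_general A t hbdd
end
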